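/- Let G be a group and H ≤ G a malnormal subgroup of finite index with rank(G) ≤ [G:H]. Let k denote the number of double cosets HgH of H in G satisfying HgH ≠ Hg⁻¹H (this number is even). Then rank(G) ≤ [G:H] − k/2. -/

import Mathlib

/-!
If `H` is a proper malnormal subgroup of finite index, its normal core is trivial, so `G` is
finite, and every double coset `HgH` with `g ∉ H` has exactly `|H|²` elements. Counting
elements of `G` then gives `[G:H] = m|H| + 1`, where `m` is the number of such double cosets.
The subgroup `H` together with one element of each self-inverse double coset and one element
of each pair `{HgH, Hg⁻¹H}` of non-self-inverse ones generates `G`, so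
`rank G ≤ |H| + m - k/2`, and `|H| + m ≤ m|H| + 1` because `m, |H| ≥ 1`.
-/

open scoped Classical

section Defs

variable {G : Type*} [Group G]

/-- A single Nielsen move on a finite multiset of group elements: replace one
occurrence of `g` by `g⁻¹`, or by `h * g` or `g * h` where `h` is another
occurrence in the multiset. -/
def NielsenMove (S T : Multiset G) : Prop :=
  (∃ g ∈ S, T = g⁻¹ ::ₘ S.erase g) ∨
    (∃ g ∈ S, ∃ h ∈ S.erase g, T = h * g ::ₘ S.erase g ∨ T = g * h ::ₘ S.erase g)

/-- Nielsen equivalence: one multiset is obtained from the other by a finite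
sequence of Nielsen moves. -/
def NielsenEquiv (S T : Multiset G) : Prop :=
  Relation.ReflTransGen NielsenMove S T

/-- The elements of the multiset `S` lie in pairwise distinct left cosets of `H`. -/
def LeftDistinct (H : Subgroup G) (S : Multiset G) : Prop :=
  (S.map fun x => ((x : G) : G ⧸ H)).Nodup

/-- The elements of the multiset `S` lie in pairwise distinct right cosets of `H`
(using that `Hx = Hy ↔ x⁻¹H = y⁻¹H`). -/
def RightDistinct (H : Subgroup G) (S : Multiset G) : Prop :=
  (S.map fun x => ((x⁻¹ : G) : G ⧸ H)).Nodup

/-- `T` is a left transversal of `H`: it contains exactly one element of each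
left coset of `H`. -/
def IsLeftTransversal (H : Subgroup G) (T : Set G) : Prop :=
  ∀ g : G, ∃! t, t ∈ T ∧ ((t : G) : G ⧸ H) = ((g : G) : G ⧸ H)

/-- `T` is a right transversal of `H`: it contains exactly one element of each
right coset of `H` (using that `Hx = Hy ↔ x⁻¹H = y⁻¹H`). -/
def IsRightTransversal (H : Subgroup G) (T : Set G) : Prop :=
  ∀ g : G, ∃! t, t ∈ T ∧ ((t⁻¹ : G) : G ⧸ H) = ((g⁻¹ : G) : G ⧸ H)

/-- The left coset `aH` as a set. -/
def lcoset (a : G) (H : Subgroup G) : Set G := {x | a⁻¹ * x ∈ H}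

/-- The right coset `Ha` as a set. -/
def rcoset (H : Subgroup G) (a : G) : Set G := {x | x * a⁻¹ ∈ H}

/-- The double coset `HgH` as a set. -/
def dcoset (H : Subgroup G) (g : G) : Set G := {x | ∃ h₁ ∈ H, ∃ h₂ ∈ H, x = h₁ * g * h₂}

/-- `S` is left-right clean relative to `H`: `S ∖ H` is nonempty and its elements
lie in pairwise distinct left cosets and pairwise distinct right cosets of `H`. -/
def LeftRightClean (H : Subgroup G) (S : Multiset G) : Prop :=
  (∃ x ∈ S, x ∉ H) ∧
    LeftDistinct H (S.filter fun x => x ∉ H) ∧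
    RightDistinct H (S.filter fun x => x ∉ H)

end Defs

open Finset

theorem Finset.exists_orbit_transversal_of_involutive_of_ne {α : Type*} [DecidableEq α]
    {f : α → α} (hf : Function.Involutive f) (s : Finset α) (hs : ∀ a ∈ s, f a ∈ s)
    (hfix : ∀ a ∈ s, f a ≠ a) : ∃ t ⊆ s, (∀ a ∈ s, a ∈ t ∨ f a ∈ t) ∧ 2 * #t = #s := by
  induction s using Finset.strongInduction with
  | H s ih =>
  rcases s.eq_empty_or_nonempty with rfl | ⟨a, ha⟩
  · exact ⟨∅, by simp⟩
  have hfa : f a ∈ s.erase a := mem_erase.2 ⟨hfix a ha, hs a ha⟩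
  set s' := (s.erase a).erase (f a)
  have hs' : ∀ b ∈ s', f b ∈ s' := by
    intro b hb
    simp only [s', mem_erase] at hb ⊢
    exact ⟨fun h => hb.2.1 (hf.injective h), fun h => hb.1 (by rw [← h, hf]), hs b hb.2.2⟩
  obtain ⟨t, hts, hcover, hcard⟩ :=
    ih s' ((erase_subset _ _).trans_ssubset (erase_ssubset ha)) hs'
      fun b hb => hfix b (mem_of_mem_erase (mem_of_mem_erase hb))
  have hat : a ∉ t := fun h => by simpa [s'] using hts h
  refine ⟨insert a t, insert_subset ha (hts.trans ((erase_subset _ _).trans (erase_subset _ _))),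
    fun b hb => ?_, ?_⟩
  · by_cases hba : b = a
    · simp [hba]
    by_cases hbfa : b = f a
    · simp [hbfa, hf a]
    rcases hcover b (by simp [s', hba, hbfa, hb]) with h | h <;> simp [h]
  · have h1 := card_erase_of_mem ha
    have h2 : #s' = #(s.erase a) - 1 := card_erase_of_mem hfa
    have h3 : 0 < #s := card_pos.2 ⟨a, ha⟩
    have h4 : 0 < #(s.erase a) := card_pos.2 ⟨_, hfa⟩
    rw [card_insert_of_notMem hat]
    omega

theorem Finset.exists_orbit_transversal_of_involutive {α : Type*} [DecidableEq α]
    {f : α → α} (hf : Function.Involutive f) (s : Finset α) (hs : ∀ a ∈ s, f a ∈ s) :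
    ∃ t ⊆ s, (∀ a ∈ s, a ∈ t ∨ f a ∈ t) ∧ 2 * #t + #{a ∈ s | f a ≠ a} = 2 * #s := by
  obtain ⟨t, hts, hcover, hcard⟩ := exists_orbit_transversal_of_involutive_of_ne hf
    {a ∈ s | f a ≠ a} (fun a ha => by simp_all [hf a, Ne.symm]) (fun a ha => (mem_filter.1 ha).2)
  refine ⟨{a ∈ s | f a = a} ∪ t, union_subset (filter_subset _ _) (hts.trans (filter_subset _ _)),
    fun a ha => ?_, ?_⟩
  · by_cases hfa : f a = a
    · simp [ha, hfa]
    · rcases hcover a (by simp [ha, hfa]) with h | h <;> simp [h]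
  · have hdisj : Disjoint {a ∈ s | f a = a} t :=
      disjoint_left.2 fun a ha hat => (mem_filter.1 (hts hat)).2 (mem_filter.1 ha).2
    have := card_filter_add_card_filter_not (s := s) (fun a => f a = a)
    rw [card_union_of_disjoint hdisj]
    simp only [ne_eq] at hcard ⊢
    omega

section DoubleCosets

variable {G : Type*} [Group G] (H : Subgroup G)

def Subgroup.IsMalnormal : Prop := ∀ g : G, g ∉ H → ∀ x ∈ H, g * x * g⁻¹ ∈ H → x = 1

variable {H}

lemma mem_dcoset_self (g : G) : g ∈ dcoset H g :=
  ⟨1, H.one_mem, 1, H.one_mem, by group⟩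

lemma dcoset_eq_of_mem {g x : G} (hx : x ∈ dcoset H g) : dcoset H x = dcoset H g := by
  obtain ⟨a, ha, b, hb, rfl⟩ := hx
  ext y
  constructor
  · rintro ⟨c, hc, d, hd, rfl⟩
    exact ⟨c * a, H.mul_mem hc ha, b * d, H.mul_mem hb hd, by group⟩
  · rintro ⟨c, hc, d, hd, rfl⟩
    exact ⟨c * a⁻¹, H.mul_mem hc (H.inv_mem ha), b⁻¹ * d, H.mul_mem (H.inv_mem hb) hd, by group⟩

lemma dcoset_eq_iff_mem {g x : G} : dcoset H x = dcoset H g ↔ x ∈ dcoset H g :=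
  ⟨fun h => h ▸ mem_dcoset_self x, dcoset_eq_of_mem⟩

lemma inv_dcoset (g : G) : (dcoset H g)⁻¹ = dcoset H g⁻¹ := by
  ext x
  constructor
  · rintro ⟨a, ha, b, hb, hx⟩
    exact ⟨b⁻¹, H.inv_mem hb, a⁻¹, H.inv_mem ha, by rw [← inv_inv x, hx]; group⟩
  · rintro ⟨a, ha, b, hb, rfl⟩
    exact ⟨b⁻¹, H.inv_mem hb, a⁻¹, H.inv_mem ha, by group⟩

lemma dcoset_of_mem {g : G} (hg : g ∈ H) : dcoset H g = H := by
  ext x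
  constructor
  · rintro ⟨a, ha, b, hb, rfl⟩
    exact H.mul_mem (H.mul_mem ha hg) hb
  · intro hx
    exact ⟨x * g⁻¹, H.mul_mem hx (H.inv_mem hg), 1, H.one_mem, by group⟩

lemma notMem_of_dcoset_ne_dcoset_inv {g : G} (h : dcoset H g ≠ dcoset H g⁻¹) : g ∉ H :=
  fun hg => h (by rw [dcoset_of_mem hg, dcoset_of_mem (H.inv_mem hg)])

lemma notMem_of_mem_dcoset {g x : G} (hg : g ∉ H) (hx : x ∈ dcoset H g) : x ∉ H := by
  obtain ⟨a, ha, b, hb, rfl⟩ := hx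
  intro hx
  refine hg ?_
  simpa [mul_assoc] using H.mul_mem (H.mul_mem (H.inv_mem ha) hx) (H.inv_mem hb)

lemma closure_union_eq_top_of_forall_mem_dcoset {R : Set G}
    (hR : ∀ g ∉ H, ∃ r ∈ R, g ∈ dcoset H r ∨ g⁻¹ ∈ dcoset H r) :
    Subgroup.closure ((H : Set G) ∪ R) = ⊤ := by
  set K := Subgroup.closure ((H : Set G) ∪ R)
  have hHK : ∀ h ∈ H, h ∈ K := fun h hh => Subgroup.subset_closure (Or.inl hh)
  have hdK : ∀ r ∈ R, ∀ x ∈ dcoset H r, x ∈ K := by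
    rintro r hr _ ⟨a, ha, b, hb, rfl⟩
    exact K.mul_mem (K.mul_mem (hHK a ha) (Subgroup.subset_closure (Or.inr hr))) (hHK b hb)
  refine eq_top_iff.2 fun g _ => ?_
  by_cases hg : g ∈ H
  · exact hHK g hg
  obtain ⟨r, hr, hgr | hgr⟩ := hR g hg
  · exact hdK r hr g hgr
  · simpa using K.inv_mem (hdK r hr _ hgr)

lemma rank_le_card_add_of_forall_mem_dcoset [Group.FG G] [Finite H] (R : Finset G)
    (hR : ∀ g ∉ H, ∃ r ∈ R, g ∈ dcoset H r ∨ g⁻¹ ∈ dcoset H r) :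
    Group.rank G ≤ Nat.card H + #R := by
  have hH := (H : Set G).toFinite
  calc Group.rank G ≤ #(hH.toFinset ∪ R) :=
        Group.rank_le (by simpa using closure_union_eq_top_of_forall_mem_dcoset hR)
    _ ≤ #hH.toFinset + #R := card_union_le _ _
    _ = Nat.card H + #R := by rw [← Nat.card_eq_card_finite_toFinset]; rfl

namespace Subgroup.IsMalnormal

variable (hH : H.IsMalnormal)
include hH

lemma card_dcoset {g : G} (hg : g ∉ H) : Nat.card (dcoset H g) = Nat.card H ^ 2 := by
  rw [sq, ← Nat.card_prod]
  refine (Nat.card_eq_of_bijective (fun p : H × H => ⟨p.1 * g * p.2, p.1, p.1.2, p.2, p.2.2, rfl⟩)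
    ⟨?_, ?_⟩).symm
  · rintro ⟨⟨a, ha⟩, ⟨b, hb⟩⟩ ⟨⟨a', ha'⟩, ⟨b', hb'⟩⟩ heq
    have h : a * g * b = a' * g * b' := congrArg Subtype.val heq
    have hconj : g * (b' * b⁻¹) * g⁻¹ = a'⁻¹ * a := by
      rw [show b' = g⁻¹ * a'⁻¹ * (a * g * b) by rw [h]; group]; group
    obtain rfl : b' = b := mul_inv_eq_one.1 <|
      hH g hg _ (H.mul_mem hb' (H.inv_mem hb)) (hconj ▸ H.mul_mem (H.inv_mem ha') ha)
    obtain rfl : a = a' := mul_right_cancel (mul_right_cancel h)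
    rfl
  · rintro ⟨x, a, ha, b, hb, rfl⟩
    exact ⟨⟨⟨a, ha⟩, ⟨b, hb⟩⟩, rfl⟩

lemma normalCore_eq_bot (hne : H ≠ ⊤) : H.normalCore = ⊥ := by
  obtain ⟨g, hg⟩ : ∃ g, g ∉ H := by simpa [eq_top_iff'] using hne
  exact eq_bot_iff.2 fun x hx => hH g hg x (H.normalCore_le hx) (hx g)

lemma finite [H.FiniteIndex] (hne : H ≠ ⊤) : Finite G := by
  have := H.normalCore.index_ne_zero_of_finite
  rw [hH.normalCore_eq_bot hne, Subgroup.index_bot] at this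
  exact Nat.finite_of_card_ne_zero this

end Subgroup.IsMalnormal

end DoubleCosets

section Counting

variable {G : Type*} [Group G] [Fintype G] (H : Subgroup G)

noncomputable def nontrivialDcosets : Finset (Set G) := ({g | g ∉ H} : Finset G).image (dcoset H)

variable {H}

lemma mem_nontrivialDcosets {D : Set G} : D ∈ nontrivialDcosets H ↔ ∃ g ∉ H, dcoset H g = D := by
  simp [nontrivialDcosets]

lemma inv_mem_nontrivialDcosets {D : Set G} (hD : D ∈ nontrivialDcosets H) :
    D⁻¹ ∈ nontrivialDcosets H := by
  obtain ⟨g, hg, rfl⟩ := mem_nontrivialDcosets.1 hD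
  exact mem_nontrivialDcosets.2 ⟨g⁻¹, by simpa using hg, (inv_dcoset g).symm⟩

lemma card_nonSelfInverse_dcosets :
    Nat.card {D : Set G // ∃ g : G, D = dcoset H g ∧ dcoset H g ≠ dcoset H g⁻¹} =
      #{D ∈ nontrivialDcosets H | D⁻¹ ≠ D} := by
  rw [Nat.card_eq_fintype_card]
  refine Fintype.card_of_subtype _ fun D => ?_
  simp only [mem_filter, mem_nontrivialDcosets]
  constructor
  · rintro ⟨⟨g, hg, rfl⟩, hne⟩
    exact ⟨g, rfl, fun h => hne (by rw [inv_dcoset, h])⟩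
  · rintro ⟨g, rfl, hne⟩
    exact ⟨⟨g, notMem_of_dcoset_ne_dcoset_inv hne, rfl⟩, fun h => hne (by rw [← h, inv_dcoset])⟩

lemma Subgroup.IsMalnormal.card_eq (hH : H.IsMalnormal) :
    Nat.card G = Nat.card H + #(nontrivialDcosets H) * Nat.card H ^ 2 := by
  have hfiber : ∀ D ∈ nontrivialDcosets H,
      #{x ∈ ({g | g ∉ H} : Finset G) | dcoset H x = D} = Nat.card H ^ 2 := by
    intro D hD
    obtain ⟨g, hg, rfl⟩ := mem_nontrivialDcosets.1 hD
    rw [← hH.card_dcoset hg, Nat.card_eq_card_toFinset]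
    congr 1
    ext x
    simp only [mem_filter, mem_univ, true_and, Set.mem_toFinset, dcoset_eq_iff_mem]
    exact ⟨And.right, fun hx => ⟨notMem_of_mem_dcoset hg hx, hx⟩⟩
  rw [Nat.card_eq_fintype_card, ← card_univ, ← card_filter_add_card_filter_not (· ∈ H),
    card_eq_sum_card_image (dcoset H) {g | g ∉ H}, ← nontrivialDcosets,
    sum_congr rfl hfiber, sum_const, smul_eq_mul]
  congr 1
  simp [Nat.card_eq_fintype_card, Fintype.card_subtype]

lemma Subgroup.IsMalnormal.index_eq (hH : H.IsMalnormal) :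
    H.index = #(nontrivialDcosets H) * Nat.card H + 1 := by
  have h := H.card_mul_index
  rw [hH.card_eq] at h
  exact Nat.eq_of_mul_eq_mul_left Nat.card_pos (by linarith)

lemma rank_le_card_add_of_forall_mem_or_inv_mem [Group.FG G] {t : Finset (Set G)}
    (hts : t ⊆ nontrivialDcosets H) (hcover : ∀ D ∈ nontrivialDcosets H, D ∈ t ∨ D⁻¹ ∈ t) :
    Group.rank G ≤ Nat.card H + #t := by
  obtain ⟨R, -, hinj, rfl⟩ := exists_subset_injOn_image_eq_of_surjOn {g | g ∉ H} t
    fun D hD => by simpa using mem_nontrivialDcosets.1 (hts hD)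
  rw [card_image_of_injOn hinj]
  refine rank_le_card_add_of_forall_mem_dcoset R fun g hg => ?_
  have hD : dcoset H g ∈ nontrivialDcosets H := mem_nontrivialDcosets.2 ⟨g, hg, rfl⟩
  rcases hcover _ hD with hgt | hgt <;> obtain ⟨r, hr, hrg⟩ := mem_image.1 hgt
  · exact ⟨r, hr, .inl (hrg ▸ mem_dcoset_self g)⟩
  · exact ⟨r, hr, .inr (by rw [hrg, inv_dcoset]; exact mem_dcoset_self _)⟩

end Counting

/-- for a malnormal finite-index subgroup `H ≤ G` with
`rank(G) ≤ [G:H]`, writing `k` for the number of non-self-inverse double cosets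
of `H` in `G`, we have `rank(G) ≤ [G:H] - k/2`. -/
theorem stmt19 {G : Type*} [Group G] [Group.FG G] (H : Subgroup G) [H.FiniteIndex]
    (hmal : ∀ g : G, g ∉ H → ∀ x ∈ H, g * x * g⁻¹ ∈ H → x = 1)
    (hrk : Group.rank G ≤ H.index) :
    Group.rank G ≤ H.index -
      Nat.card {D : Set G // ∃ g : G, D = dcoset H g ∧ dcoset H g ≠ dcoset H g⁻¹} / 2 := by
  by_cases htop : H = ⊤
  · subst htop
    have : IsEmpty {D : Set G // ∃ g : G, D = dcoset ⊤ g ∧ dcoset ⊤ g ≠ dcoset ⊤ g⁻¹} :=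
      ⟨fun ⟨_, g, _, hne⟩ => notMem_of_dcoset_ne_dcoset_inv hne (Subgroup.mem_top g)⟩
    simpa using hrk
  have hH : H.IsMalnormal := hmal
  have := hH.finite htop
  let := Fintype.ofFinite G
  obtain ⟨t, hts, hcover, hcard⟩ := (nontrivialDcosets H).exists_orbit_transversal_of_involutive
    inv_involutive fun _ => inv_mem_nontrivialDcosets
  have hrank := rank_le_card_add_of_forall_mem_or_inv_mem hts hcover
  have hm : #(nontrivialDcosets H) ≠ 0 := fun h0 =>
    htop (Subgroup.index_eq_one.1 (by simp [hH.index_eq, h0]))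
  have hh : 0 < Nat.card H := Nat.card_pos
  have hsum_le : Nat.card H + #(nontrivialDcosets H) ≤ #(nontrivialDcosets H) * Nat.card H + 1 := by
    rcases Nat.exists_eq_succ_of_ne_zero hm with ⟨m, hm'⟩
    rw [hm']; nlinarith
  rw [card_nonSelfInverse_dcosets, hH.index_eq]
  omega
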